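/- For α > 0, 0 < r < 1 and 1 ≤ p < ∞, sup_{f ∈ C^{α,r}_{β,p}} ‖f − S_{n-1}(f;·)‖_C ≤ (1/π) ‖P^{(n)}_{α,r,β}‖_{p'}, where 1/p + 1/p' = 1. -/

import Mathlib

open Real MeasureTheory Filter Finset
open scoped ENNReal

noncomputable def Pker (α r β : ℝ) (t : ℝ) : ℝ :=
  ∑' k : ℕ, Real.exp (-α * ((k : ℝ) + 1) ^ r) * Real.cos (((k : ℝ) + 1) * t - β * π / 2)

noncomputable def Ptail (α r β : ℝ) (n : ℕ) (t : ℝ) : ℝ :=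
  ∑' k : ℕ, Real.exp (-α * ((n : ℝ) + (k : ℝ)) ^ r) * Real.cos (((n : ℝ) + (k : ℝ)) * t - β * π / 2)

def IsTrigPoly (n : ℕ) (T : ℝ → ℝ) : Prop :=
  ∃ a b : ℕ → ℝ, ∀ t : ℝ,
    T t = ∑ k ∈ Finset.range n, (a k * Real.cos ((k : ℝ) * t) + b k * Real.sin ((k : ℝ) * t))

noncomputable def supNorm (g : ℝ → ℝ) : ℝ := ⨆ x : ℝ, |g x|

noncomputable def LpNorm (p : ℝ) (φ : ℝ → ℝ) : ℝ :=
  (∫ t in (0:ℝ)..(2 * π), |φ t| ^ p) ^ (1 / p)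

noncomputable def bestApprox (n : ℕ) (p : ℝ) (φ : ℝ → ℝ) : ℝ :=
  sInf {e : ℝ | ∃ T : ℝ → ℝ, IsTrigPoly n T ∧ e = LpNorm p (fun t => φ t - T t)}

noncomputable def pnormE (p : ℝ≥0∞) (φ : ℝ → ℝ) : ℝ :=
  (eLpNorm φ p (volume.restrict (Set.Ioc (0:ℝ) (2 * π)))).toReal

noncomputable def bestApproxE (n : ℕ) (p : ℝ≥0∞) (φ : ℝ → ℝ) : ℝ :=
  sInf {e : ℝ | ∃ T : ℝ → ℝ, IsTrigPoly n T ∧ e = pnormE p (fun t => φ t - T t)}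

noncomputable def fourierPartial (n : ℕ) (f : ℝ → ℝ) (x : ℝ) : ℝ :=
  (1 / π) * ∫ t in (0:ℝ)..(2 * π),
    f t * (1 / 2 + ∑ k ∈ Finset.Icc 1 (n - 1), Real.cos ((k : ℝ) * (x - t)))

noncomputable def Gauss2F1 (a b c z : ℝ) : ℝ :=
  ∑' k : ℕ, (∏ i ∈ Finset.range k, ((a + i) * (b + i) / (c + i))) * z ^ k / (k.factorial : ℝ)

noncomputable def tailSum (α r : ℝ) (n : ℕ) : ℝ :=
  ∑' k : ℕ, Real.exp (-α * ((n : ℝ) + (k : ℝ)) ^ r)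

theorem sumExp (α r : ℝ) (hα : 0 < α) (hr : 0 < r) :
    Summable (fun k : ℕ => Real.exp (-α * (k : ℝ) ^ r)) := by
  obtain ⟨m, hm⟩ : ∃ m : ℕ, 1 < (m : ℝ) * r := by
    obtain ⟨m, hm⟩ := exists_nat_gt (2 / r)
    refine ⟨m, ?_⟩
    have : 2 / r * r < m * r := by exact mul_lt_mul_of_pos_right hm hr
    rw [div_mul_cancel₀] at this <;> nlinarith
  have key : ∀ k : ℕ, 1 ≤ k → Real.exp (-α * (k:ℝ) ^ r) ≤
      (m.factorial : ℝ) / α ^ m * ((k:ℝ) ^ ((m:ℝ) * r))⁻¹ := by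
    intro k hk
    have hk1 : (1:ℝ) ≤ (k:ℝ) := by exact_mod_cast hk
    have hk0 : (0:ℝ) < (k:ℝ) ^ r := Real.rpow_pos_of_pos (by linarith) r
    have hkmr : (0:ℝ) < (k:ℝ) ^ ((m:ℝ) * r) := Real.rpow_pos_of_pos (by linarith) _
    have h1 : (α * (k:ℝ) ^ r) ^ m / (m.factorial : ℝ) ≤ Real.exp (α * (k:ℝ) ^ r) := by
      calc (α * (k:ℝ) ^ r) ^ m / (m.factorial : ℝ)
          ≤ ∑ i ∈ Finset.range (m+1), (α * (k:ℝ) ^ r) ^ i / (i.factorial : ℝ) := by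
            refine Finset.single_le_sum (f := fun i => (α * (k:ℝ)^r)^i / (i.factorial:ℝ)) ?_ ?_
            · intro i _; positivity
            · simp
        _ ≤ Real.exp (α * (k:ℝ) ^ r) := Real.sum_le_exp_of_nonneg (by positivity) _
    have h2 : (α * (k:ℝ) ^ r) ^ m = α ^ m * (k:ℝ) ^ ((m:ℝ) * r) := by
      rw [mul_pow, ← Real.rpow_natCast ((k:ℝ)^r) m, ← Real.rpow_mul (by linarith), mul_comm r m]
    rw [neg_mul, Real.exp_neg]
    have h3 : α ^ m * (k:ℝ) ^ ((m:ℝ) * r) / (m.factorial : ℝ) ≤ Real.exp (α * (k:ℝ)^r) := by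
      rw [← h2]; exact h1
    have hfac : (0:ℝ) < (m.factorial : ℝ) := by exact_mod_cast m.factorial_pos
    have hpos : (0:ℝ) < α ^ m * (k:ℝ) ^ ((m:ℝ) * r) / (m.factorial : ℝ) := by positivity
    calc (Real.exp (α * (k:ℝ)^r))⁻¹ ≤ (α ^ m * (k:ℝ) ^ ((m:ℝ) * r) / (m.factorial : ℝ))⁻¹ := by
          exact inv_anti₀ hpos h3
      _ = (m.factorial : ℝ) / α ^ m * ((k:ℝ) ^ ((m:ℝ) * r))⁻¹ := by
          field_simp
  rw [← summable_nat_add_iff 1]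
  have hs : Summable (fun k : ℕ => (m.factorial : ℝ) / α ^ m * (((k+1:ℕ):ℝ) ^ ((m:ℝ) * r))⁻¹) := by
    apply Summable.mul_left
    exact ((Real.summable_nat_rpow_inv).mpr hm).comp_injective (add_left_injective 1)
  refine Summable.of_nonneg_of_le (fun k => (Real.exp_pos _).le) (fun k => ?_) hs
  exact_mod_cast key (k+1) (Nat.le_add_left 1 k)

theorem intCos (ℓ : ℤ) (ψ : ℝ) : ∫ t in (0:ℝ)..(2*π), Real.cos (ℓ * t + ψ)
    = if ℓ = 0 then 2*π*Real.cos ψ else 0 := by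
  rcases eq_or_ne ℓ 0 with h | h
  · simp [h, two_mul, mul_comm]
  · have hc : (ℓ:ℝ) ≠ 0 := Int.cast_ne_zero.mpr h
    rw [intervalIntegral.integral_comp_mul_add (a := 0) (b := 2*π) (f := Real.cos) hc ψ,
      integral_cos]
    rw [mul_comm (ℓ:ℝ) (2*π)]
    rw [show (2*π*ℓ + ψ : ℝ) = ψ + ℓ * (2*π) by ring, Real.sin_add_int_mul_two_pi]
    simp [h]

theorem intCosNat (j : ℕ) (hj : 1 ≤ j) (ψ : ℝ) :
    ∫ t in (0:ℝ)..(2*π), Real.cos (j * t + ψ) = 0 := by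
  have h := intCos (j : ℤ) ψ
  rw [if_neg (by exact_mod_cast Nat.one_le_iff_ne_zero.mp hj)] at h
  push_cast at h
  exact h

theorem orthCC (k m : ℕ) (hm : 1 ≤ m) (θ x : ℝ) :
    ∫ t in (0:ℝ)..(2*π), Real.cos (k * t + θ) * Real.cos (m * (x - t))
      = if k = m then π * Real.cos (k * x + θ) else 0 := by
  set ℓ₁ : ℤ := (k:ℤ) - (m:ℤ) with hℓ₁
  set ℓ₂ : ℤ := (k:ℤ) + (m:ℤ) with hℓ₂
  have hpt : ∀ t : ℝ, Real.cos (k * t + θ) * Real.cos (m * (x - t))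
      = 1/2 * Real.cos ((ℓ₁ : ℝ) * t + (θ + m * x))
        + 1/2 * Real.cos ((ℓ₂ : ℝ) * t + (θ - m * x)) := by
    intro t
    rw [show (ℓ₁:ℝ) * t + (θ + m * x) = ((k:ℝ)*t + θ) + ((m:ℝ)*x - m*t) by
        rw [hℓ₁]; push_cast; ring,
      show (ℓ₂:ℝ) * t + (θ - m * x) = ((k:ℝ)*t + θ) - ((m:ℝ)*x - m*t) by
        rw [hℓ₂]; push_cast; ring,
      Real.cos_add ((k:ℝ)*t + θ) ((m:ℝ)*x - m*t),
      Real.cos_sub ((k:ℝ)*t + θ) ((m:ℝ)*x - m*t),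
      show (m:ℝ) * (x - t) = m*x - m*t by ring]
    ring
  have c1 : Continuous fun t : ℝ => 1/2 * Real.cos ((ℓ₁ : ℝ) * t + (θ + m * x)) := by fun_prop
  have c2 : Continuous fun t : ℝ => 1/2 * Real.cos ((ℓ₂ : ℝ) * t + (θ - m * x)) := by fun_prop
  rw [intervalIntegral.integral_congr (g := fun t => 1/2 * Real.cos ((ℓ₁ : ℝ) * t + (θ + m * x))
        + 1/2 * Real.cos ((ℓ₂ : ℝ) * t + (θ - m * x))) (fun t _ => hpt t)]
  rw [intervalIntegral.integral_add (c1.intervalIntegrable 0 (2*π)) (c2.intervalIntegrable 0 (2*π)),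
    intervalIntegral.integral_const_mul, intervalIntegral.integral_const_mul, intCos, intCos]
  have h2 : ¬ (ℓ₂ = 0) := by rw [hℓ₂]; omega
  rw [if_neg h2]
  rcases eq_or_ne k m with h | h
  · subst h
    rw [if_pos (by rw [hℓ₁]; ring), if_pos rfl, Real.cos_add, Real.cos_add]
    ring
  · rw [if_neg (by rw [hℓ₁]; omega), if_neg h]
    ring

noncomputable def Acoef (φ : ℝ → ℝ) (j : ℕ) : ℝ :=
  ∫ t in Set.Ioc (0:ℝ) (2*π), Real.cos ((j:ℝ)*t) * φ t

noncomputable def Bcoef (φ : ℝ → ℝ) (j : ℕ) : ℝ :=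
  ∫ t in Set.Ioc (0:ℝ) (2*π), Real.sin ((j:ℝ)*t) * φ t

noncomputable def FT (α r β : ℝ) (φ : ℝ → ℝ) (j : ℕ) (x : ℝ) : ℝ :=
  Real.exp (-α * (j:ℝ)^r) *
    (Real.cos ((j:ℝ)*x - β*π/2) * Acoef φ j + Real.sin ((j:ℝ)*x - β*π/2) * Bcoef φ j)

theorem coefInt (φ : ℝ → ℝ) (hφi : IntegrableOn φ (Set.Ioc (0:ℝ) (2*π))) (j : ℕ) (y c : ℝ) :
    ∫ t in Set.Ioc (0:ℝ) (2*π), Real.cos ((j:ℝ)*(y - t) - c) * φ t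
      = Real.cos ((j:ℝ)*y - c) * Acoef φ j + Real.sin ((j:ℝ)*y - c) * Bcoef φ j := by
  have hint1 : IntegrableOn (fun t => Real.cos ((j:ℝ)*t) * φ t) (Set.Ioc (0:ℝ) (2*π)) :=
    hφi.bdd_mul ((Real.continuous_cos.comp (continuous_const.mul continuous_id)).aestronglyMeasurable) (c := 1) (Filter.Eventually.of_forall fun t => by simpa using Real.abs_cos_le_one _)
  have hint2 : IntegrableOn (fun t => Real.sin ((j:ℝ)*t) * φ t) (Set.Ioc (0:ℝ) (2*π)) :=
    hφi.bdd_mul ((Real.continuous_sin.comp (continuous_const.mul continuous_id)).aestronglyMeasurable) (c := 1) (Filter.Eventually.of_forall fun t => by simpa using Real.abs_sin_le_one _)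
  have hpt : ∀ t : ℝ, Real.cos ((j:ℝ)*(y - t) - c) * φ t
      = Real.cos ((j:ℝ)*y - c) * (Real.cos ((j:ℝ)*t) * φ t)
        + Real.sin ((j:ℝ)*y - c) * (Real.sin ((j:ℝ)*t) * φ t) := by
    intro t
    rw [show (j:ℝ)*(y - t) - c = ((j:ℝ)*y - c) - (j:ℝ)*t by ring, Real.cos_sub]
    ring
  rw [setIntegral_congr_fun measurableSet_Ioc (fun t _ => hpt t),
    integral_add (hint1.const_mul _) (hint2.const_mul _),
    integral_const_mul, integral_const_mul]
  rfl

theorem sumExpShift (α r : ℝ) (hα : 0 < α) (hr : 0 < r) (n : ℕ) :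
    Summable (fun k : ℕ => Real.exp (-α * (((n + k : ℕ)) : ℝ) ^ r)) := by
  have := (summable_nat_add_iff (f := fun k : ℕ => Real.exp (-α * (k : ℝ) ^ r)) n).mpr
    (sumExp α r hα hr)
  refine this.congr fun k => ?_
  simp [Nat.add_comm]

theorem Ptail_eq (α r β : ℝ) (n : ℕ) (u : ℝ) :
    Ptail α r β n u = ∑' k : ℕ, Real.exp (-α * (((n + k : ℕ)) : ℝ) ^ r) *
      Real.cos ((((n + k : ℕ)) : ℝ) * u - β * π / 2) := by
  unfold Ptail
  exact tsum_congr fun k => by push_cast; ring_nf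

theorem K1 (α r β : ℝ) (hα : 0 < α) (hr : 0 < r) (φ : ℝ → ℝ)
    (hφi : IntegrableOn φ (Set.Ioc (0:ℝ) (2*π))) (n : ℕ) (x : ℝ) :
    ∫ t in Set.Ioc (0:ℝ) (2*π), Ptail α r β n (x - t) * φ t
      = ∑' k : ℕ, FT α r β φ (n + k) x := by
  have hEn := sumExpShift α r hα hr n
  set c := β * π / 2 with hc
  set F : ℕ → ℝ → ℝ := fun k t =>
    (Real.exp (-α * (((n + k : ℕ)) : ℝ) ^ r) * Real.cos ((((n + k : ℕ)) : ℝ) * (x - t) - c)) * φ t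
    with hF
  have hpt : ∀ t : ℝ, Ptail α r β n (x - t) * φ t = ∑' k, F k t := by
    intro t
    rw [Ptail_eq, hF, ← tsum_mul_right]
  rw [setIntegral_congr_fun measurableSet_Ioc (fun t _ => hpt t)]
  have hFint : ∀ k : ℕ, IntegrableOn (F k) (Set.Ioc (0:ℝ) (2*π)) := by
    intro k
    refine hφi.bdd_mul ?_ (c := Real.exp (-α * (((n + k : ℕ)) : ℝ) ^ r)) (Filter.Eventually.of_forall fun t => ?_)
    · exact (continuous_const.mul ((Real.continuous_cos.comp (by fun_prop)))).aestronglyMeasurable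
    · rw [Real.norm_eq_abs, abs_mul, Real.abs_exp]
      nlinarith [Real.abs_cos_le_one ((((n + k : ℕ)) : ℝ) * (x - t) - c), Real.exp_pos (-α * (((n + k : ℕ)) : ℝ) ^ r), abs_nonneg (Real.cos ((((n + k : ℕ)) : ℝ) * (x - t) - c))]
  have hnorm : Summable fun k : ℕ => ∫ t in Set.Ioc (0:ℝ) (2*π), ‖F k t‖ := by
    refine Summable.of_nonneg_of_le (fun k => integral_nonneg (fun t => norm_nonneg (F k t)))
      (fun k => ?_) (hEn.mul_right (∫ t in Set.Ioc (0:ℝ) (2*π), ‖φ t‖))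
    rw [← integral_const_mul]
    refine integral_mono_of_nonneg (Filter.Eventually.of_forall fun t => norm_nonneg (F k t))
      (hφi.norm.const_mul _) (Filter.Eventually.of_forall fun t => ?_)
    simp only [hF, Real.norm_eq_abs, abs_mul, Real.abs_exp]
    have h1 := Real.abs_cos_le_one ((((n + k : ℕ)) : ℝ) * (x - t) - c)
    have h2 := (Real.exp_pos (-α * (((n + k : ℕ)) : ℝ) ^ r)).le
    have h3 := abs_nonneg (φ t)
    nlinarith [mul_le_mul_of_nonneg_right (mul_le_mul_of_nonneg_left h1 h2) h3]
  rw [← integral_tsum_of_summable_integral_norm hFint hnorm]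
  refine tsum_congr fun k => ?_
  have : ∀ t : ℝ, F k t = Real.exp (-α * (((n + k : ℕ)) : ℝ) ^ r) *
      (Real.cos ((((n + k : ℕ)) : ℝ) * (x - t) - c) * φ t) := fun t => by rw [hF]; ring
  rw [setIntegral_congr_fun measurableSet_Ioc (fun t _ => this t), integral_const_mul,
    coefInt φ hφi (n+k) x c, FT]

theorem lintegral_cont (g : ℝ → ℝ) (hg : Continuous g) (qr : ℝ) (hqr : 0 < qr) :
    ∫⁻ t in Set.Ioc (0:ℝ) (2*π), (‖g t‖₊ : ℝ≥0∞) ^ qr ∂volume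
      = ENNReal.ofReal (∫ t in (0:ℝ)..(2*π), |g t| ^ qr) := by
  have hcont : Continuous fun t => |g t| ^ qr :=
    Continuous.rpow_const hg.abs (fun t => Or.inr hqr.le)
  rw [intervalIntegral.integral_of_le (by positivity : (0:ℝ) ≤ 2*π),
    ofReal_integral_eq_lintegral_ofReal (hcont.integrableOn_Ioc)
      (Filter.Eventually.of_forall fun t => Real.rpow_nonneg (abs_nonneg _) _)]
  refine lintegral_congr fun t => ?_
  rw [← ENNReal.ofReal_rpow_of_nonneg (abs_nonneg _) hqr.le]
  congr 1
  rw [← enorm_eq_nnnorm, ← ofReal_norm, Real.norm_eq_abs]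

theorem eLpNorm_shift (q : ℝ≥0∞) (hq0 : q ≠ 0) (g : ℝ → ℝ) (hg : Continuous g)
    (hper : ∀ t : ℝ, g (t + 2*π) = g t) (x : ℝ) :
    eLpNorm (fun t => g (x - t)) q (volume.restrict (Set.Ioc (0:ℝ) (2*π)))
      ≤ eLpNorm g q (volume.restrict (Set.Ioc (0:ℝ) (2*π))) := by
  have hperP : Function.Periodic g (2*π) := hper
  rcases eq_or_ne q ∞ with hq | hq
  · -- q = ∞ : essSup bound
    subst hq
    rw [eLpNorm_exponent_top, eLpNorm_exponent_top]
    set L := eLpNormEssSup g (volume.restrict (Set.Ioc (0:ℝ) (2*π))) with hL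
    have key : ∀ u : ℝ, (‖g u‖₊ : ℝ≥0∞) ≤ L := by
      intro u
      -- reduce to Ioc
      have h2π : (0:ℝ) < 2*π := by positivity
      obtain ⟨v, hv, hgv⟩ : ∃ v ∈ Set.Ioc (0:ℝ) (2*π), g v = g u := by
        refine ⟨toIocMod h2π 0 u, by simpa using toIocMod_mem_Ioc h2π 0 u, ?_⟩
        have : toIocMod h2π 0 u = u - toIocDiv h2π 0 u • (2*π) := by
          rw [toIocMod]
        rw [this, hperP.sub_zsmul_eq]
      rw [← hgv]
      by_contra hlt
      push_neg at hlt
      -- continuity: positive measure set where ‖g‖₊ > L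
      have hopen : IsOpen {t : ℝ | L < (‖g t‖₊ : ℝ≥0∞)} := by
        have : Continuous fun t : ℝ => (‖g t‖₊ : ℝ≥0∞) :=
          (ENNReal.continuous_coe.comp hg.nnnorm)
        exact isOpen_lt continuous_const this
      obtain ⟨ε, hε, hball⟩ := Metric.isOpen_iff.mp hopen v hlt
      set a := max (v - ε/2) 0 with ha
      have hav : a < v := by
        rcases le_or_gt (v - ε/2) 0 with h | h
        · rw [ha, max_eq_right h]; exact hv.1
        · rw [ha, max_eq_left h.le]; linarith
      have hsub : Set.Ioo a v ⊆ {t : ℝ | L < (‖g t‖₊ : ℝ≥0∞)} ∩ Set.Ioc 0 (2*π) := by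
        intro t ht
        constructor
        · apply hball
          rw [Metric.mem_ball, Real.dist_eq, abs_lt]
          constructor
          · have : v - ε/2 ≤ a := le_max_left _ _
            have := ht.1; linarith
          · have := ht.2; linarith
        · exact ⟨lt_of_le_of_lt (le_max_right _ _) ht.1, le_trans ht.2.le hv.2⟩
      have hpos : 0 < volume (Set.Ioo a v) := by
        rw [Real.volume_Ioo]
        exact ENNReal.ofReal_pos.mpr (by linarith)
      have hae := enorm_ae_le_eLpNormEssSup g (volume.restrict (Set.Ioc (0:ℝ) (2*π)))
      rw [ae_iff] at hae
      have h1 : (volume.restrict (Set.Ioc (0:ℝ) (2*π))) (Set.Ioo a v)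
          ≤ (volume.restrict (Set.Ioc (0:ℝ) (2*π))) {t : ℝ | ¬(‖g t‖₊ : ℝ≥0∞) ≤ L} :=
        measure_mono (fun t ht => not_le.mpr (hsub ht).1)
      rw [show {t : ℝ | ¬(‖g t‖₊ : ℝ≥0∞) ≤ L} = {a | ¬‖g a‖ₑ ≤ eLpNormEssSup g (volume.restrict (Set.Ioc (0:ℝ) (2*π)))} from rfl, hae] at h1
      have h2 : (volume.restrict (Set.Ioc (0:ℝ) (2*π))) (Set.Ioo a v) = volume (Set.Ioo a v) := by
        rw [Measure.restrict_apply measurableSet_Ioo,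
          Set.inter_eq_left.mpr (fun t ht => (hsub ht).2)]
      rw [h2] at h1
      exact absurd h1 hpos.not_ge
    exact essSup_le_of_ae_le _ (Filter.Eventually.of_forall fun t => key (x - t))
  · -- q < ∞
    have hqr : 0 < q.toReal := ENNReal.toReal_pos hq0 hq
    rw [eLpNorm_eq_lintegral_rpow_enorm_toReal hq0 hq, eLpNorm_eq_lintegral_rpow_enorm_toReal hq0 hq]
    apply le_of_eq
    congr 1
    simp only [enorm_eq_nnnorm]
    rw [lintegral_cont (fun t => g (x - t)) (hg.comp (continuous_sub_left x)) _ hqr,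
      lintegral_cont g hg _ hqr]
    congr 1
    have hwper : Function.Periodic (fun t => |g t| ^ q.toReal) (2*π) := fun t => by
      simp only [hper t]
    calc ∫ t in (0:ℝ)..(2*π), |g (x - t)| ^ q.toReal
        = ∫ u in x - 2*π..x - 0, |g u| ^ q.toReal := by
          rw [← intervalIntegral.integral_comp_sub_left (fun u => |g u| ^ q.toReal) x]
      _ = ∫ u in (x - 2*π)..(x - 2*π) + 2*π, |g u| ^ q.toReal := by norm_num
      _ = ∫ u in (0:ℝ)..(0:ℝ) + 2*π, |g u| ^ q.toReal := hwper.intervalIntegral_add_eq _ _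
      _ = ∫ u in (0:ℝ)..(2*π), |g u| ^ q.toReal := by norm_num

theorem holderBound (p q : ℝ≥0∞) (hp : 1 ≤ p) (hpq : p⁻¹ + q⁻¹ = 1)
    (φ : ℝ → ℝ) (hφ : MemLp φ p (volume.restrict (Set.Ioc (0:ℝ) (2*π))))
    (hφ1 : (eLpNorm φ p (volume.restrict (Set.Ioc (0:ℝ) (2*π)))).toReal ≤ 1)
    (K : ℝ → ℝ) (hK : Continuous K) (M : ℝ) (hKb : ∀ t, |K t| ≤ M) :
    |∫ t in Set.Ioc (0:ℝ) (2*π), K t * φ t| ≤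
      (eLpNorm K q (volume.restrict (Set.Ioc (0:ℝ) (2*π)))).toReal := by
  set ν := volume.restrict (Set.Ioc (0:ℝ) (2*π)) with hν
  have hKm : MemLp K q ν := by
    refine MemLp.mono_exponent ?_ le_top
    exact memLp_top_of_bound hK.aestronglyMeasurable M
      (Filter.Eventually.of_forall fun t => by rw [Real.norm_eq_abs]; exact hKb t)
  have hφint : Integrable φ ν := hφ.integrable hp
  have hprod : Integrable (fun t => K t * φ t) ν :=
    hφint.bdd_mul hK.aestronglyMeasurable (c := M) (Filter.Eventually.of_forall fun t => by rw [Real.norm_eq_abs]; exact hKb t)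
  have h1 : |∫ t, K t * φ t ∂ν| ≤ ∫ t, ‖K t * φ t‖ ∂ν := by
    rw [← Real.norm_eq_abs]
    exact norm_integral_le_integral_norm _
  have h2 : ∫ t, ‖K t * φ t‖ ∂ν = (eLpNorm (fun t => K t * φ t) 1 ν).toReal := by
    rw [eLpNorm_one_eq_lintegral_enorm, integral_norm_eq_lintegral_enorm hprod.1]
  have h3 : eLpNorm (fun t => K t * φ t) 1 ν ≤ eLpNorm K q ν * eLpNorm φ p ν := by
    haveI : ENNReal.HolderTriple q p 1 := ⟨by rw [inv_one, ← hpq, add_comm]⟩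
    have h3' := eLpNorm_le_eLpNorm_mul_eLpNorm_of_nnnorm (μ := ν) (p := q) (q := p) (r := 1)
      hK.aestronglyMeasurable hφ.1 (fun a b : ℝ => a * b) 1
      (Filter.Eventually.of_forall fun t => by rw [one_mul]; exact le_of_eq (nnnorm_mul _ _))
    rwa [ENNReal.coe_one, one_mul] at h3'
  calc |∫ t in Set.Ioc (0:ℝ) (2*π), K t * φ t|
      ≤ (eLpNorm (fun t => K t * φ t) 1 ν).toReal := by rw [← h2]; exact h1
    _ ≤ ((eLpNorm K q ν) * (eLpNorm φ p ν)).toReal := by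
        apply ENNReal.toReal_mono _ h3
        exact ENNReal.mul_ne_top hKm.2.ne hφ.2.ne
    _ = (eLpNorm K q ν).toReal * (eLpNorm φ p ν).toReal := ENNReal.toReal_mul
    _ ≤ (eLpNorm K q ν).toReal * 1 :=
        mul_le_mul_of_nonneg_left hφ1 ENNReal.toReal_nonneg
    _ = (eLpNorm K q ν).toReal := mul_one _

theorem sumExpShift' (α r : ℝ) (hα : 0 < α) (hr : 0 < r) (n : ℕ) :
    Summable (fun k : ℕ => Real.exp (-α * ((n : ℝ) + (k : ℝ)) ^ r)) := by
  refine (sumExpShift α r hα hr n).congr fun k => ?_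
  push_cast
  ring_nf

theorem sumPtailTerm (α r β : ℝ) (hα : 0 < α) (hr : 0 < r) (n : ℕ) (t : ℝ) :
    Summable (fun k : ℕ => Real.exp (-α * ((n : ℝ) + (k : ℝ)) ^ r) *
      Real.cos (((n : ℝ) + (k : ℝ)) * t - β * π / 2)) := by
  refine Summable.of_norm_bounded (sumExpShift' α r hα hr n) fun k => ?_
  rw [Real.norm_eq_abs, abs_mul, Real.abs_exp]
  nlinarith [Real.abs_cos_le_one (((n : ℝ) + (k : ℝ)) * t - β * π / 2),
    Real.exp_pos (-α * ((n : ℝ) + (k : ℝ)) ^ r),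
    abs_nonneg (Real.cos (((n : ℝ) + (k : ℝ)) * t - β * π / 2))]

theorem Ptail_cont (α r β : ℝ) (hα : 0 < α) (hr : 0 < r) (n : ℕ) :
    Continuous (Ptail α r β n) := by
  refine continuous_tsum (fun k => ?_) (sumExpShift' α r hα hr n) (fun k t => ?_)
  · fun_prop
  · rw [Real.norm_eq_abs, abs_mul, Real.abs_exp]
    nlinarith [Real.abs_cos_le_one (((n : ℝ) + (k : ℝ)) * t - β * π / 2),
      Real.exp_pos (-α * ((n : ℝ) + (k : ℝ)) ^ r),
      abs_nonneg (Real.cos (((n : ℝ) + (k : ℝ)) * t - β * π / 2))]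

theorem Ptail_bound (α r β : ℝ) (hα : 0 < α) (hr : 0 < r) (n : ℕ) (t : ℝ) :
    |Ptail α r β n t| ≤ ∑' k : ℕ, Real.exp (-α * ((n : ℝ) + (k : ℝ)) ^ r) := by
  rw [← Real.norm_eq_abs]
  refine le_trans (norm_tsum_le_tsum_norm ?_) ?_
  · exact (sumPtailTerm α r β hα hr n t).norm
  · refine Summable.tsum_le_tsum (fun k => ?_) ((sumPtailTerm α r β hα hr n t).norm) (sumExpShift' α r hα hr n)
    rw [Real.norm_eq_abs, abs_mul, Real.abs_exp]
    nlinarith [Real.abs_cos_le_one (((n : ℝ) + (k : ℝ)) * t - β * π / 2),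
      Real.exp_pos (-α * ((n : ℝ) + (k : ℝ)) ^ r),
      abs_nonneg (Real.cos (((n : ℝ) + (k : ℝ)) * t - β * π / 2))]

theorem Ptail_per (α r β : ℝ) (n : ℕ) (t : ℝ) :
    Ptail α r β n (t + 2*π) = Ptail α r β n t := by
  unfold Ptail
  refine tsum_congr fun k => ?_
  congr 1
  rw [show ((n : ℝ) + (k : ℝ)) * (t + 2*π) - β*π/2
      = (((n : ℝ) + (k : ℝ)) * t - β*π/2) + ((n + k : ℕ) : ℤ) * (2*π) by push_cast; ring,
    Real.cos_add_int_mul_two_pi]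

theorem intSinNat (j : ℕ) (hj : 1 ≤ j) (ψ : ℝ) :
    ∫ t in (0:ℝ)..(2*π), Real.sin (j * t + ψ) = 0 := by
  calc ∫ t in (0:ℝ)..(2*π), Real.sin (j * t + ψ)
      = ∫ t in (0:ℝ)..(2*π), Real.cos (j * t + (ψ - π/2)) := by
        refine intervalIntegral.integral_congr (g := fun t => Real.cos ((j:ℝ) * t + (ψ - π/2)))
          fun t _ => ?_
        show Real.sin ((j:ℝ) * t + ψ) = Real.cos ((j:ℝ) * t + (ψ - π/2))
        rw [show (j:ℝ)*t + (ψ - π/2) = ((j:ℝ)*t + ψ) - π/2 by ring, Real.cos_sub_pi_div_two]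
    _ = 0 := intCosNat j hj (ψ - π/2)

theorem orthSC (k m : ℕ) (hm : 1 ≤ m) (θ x : ℝ) :
    ∫ t in (0:ℝ)..(2*π), Real.sin (k * t + θ) * Real.cos (m * (x - t))
      = if k = m then π * Real.sin (k * x + θ) else 0 := by
  have h := orthCC k m hm (θ - π/2) x
  rw [show (k:ℝ)*x + (θ - π/2) = ((k:ℝ)*x + θ) - π/2 by ring, Real.cos_sub_pi_div_two] at h
  calc ∫ t in (0:ℝ)..(2*π), Real.sin (k * t + θ) * Real.cos (m * (x - t))
      = ∫ t in (0:ℝ)..(2*π), Real.cos (k * t + (θ - π/2)) * Real.cos (m * (x - t)) := by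
        refine intervalIntegral.integral_congr
          (g := fun t => Real.cos ((k:ℝ) * t + (θ - π/2)) * Real.cos ((m:ℝ) * (x - t)))
          fun t _ => ?_
        show Real.sin ((k:ℝ) * t + θ) * Real.cos ((m:ℝ) * (x - t))
          = Real.cos ((k:ℝ) * t + (θ - π/2)) * Real.cos ((m:ℝ) * (x - t))
        rw [show (k:ℝ)*t + (θ - π/2) = ((k:ℝ)*t + θ) - π/2 by ring, Real.cos_sub_pi_div_two]
    _ = if k = m then π * Real.sin (k * x + θ) else 0 := h

theorem FT_cont (α r β : ℝ) (φ : ℝ → ℝ) (j : ℕ) : Continuous (FT α r β φ j) := by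
  unfold FT
  fun_prop

theorem FT_zero (α r β : ℝ) (φ : ℝ → ℝ)
    (hmean : (∫ t in (0:ℝ)..(2 * π), φ t) = 0) (x : ℝ) : FT α r β φ 0 x = 0 := by
  have hA : Acoef φ 0 = 0 := by
    unfold Acoef
    have h0 : ∫ t in Set.Ioc (0:ℝ) (2*π), Real.cos (((0:ℕ):ℝ)*t) * φ t
        = ∫ t in Set.Ioc (0:ℝ) (2*π), φ t :=
      setIntegral_congr_fun measurableSet_Ioc (fun t _ => by norm_num)
    rw [h0, ← intervalIntegral.integral_of_le (by positivity : (0:ℝ) ≤ 2*π)]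
    exact hmean
  have hB : Bcoef φ 0 = 0 := by
    unfold Bcoef
    have : ∀ t : ℝ, Real.sin ((0:ℕ):ℝ)*t = 0 := by norm_num
    refine Eq.trans (setIntegral_congr_fun measurableSet_Ioc (g := fun _ => (0:ℝ))
      (fun t _ => by norm_num)) (by simp)
  unfold FT
  rw [hA, hB]
  ring

theorem FT_bound (α r β : ℝ) (φ : ℝ → ℝ) (j : ℕ) (x : ℝ) :
    |FT α r β φ j x| ≤ Real.exp (-α * (j:ℝ)^r) * (|Acoef φ j| + |Bcoef φ j|) := by
  unfold FT
  rw [abs_mul, Real.abs_exp]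
  refine mul_le_mul_of_nonneg_left ?_ (Real.exp_pos _).le
  refine le_trans (abs_add_le _ _) (add_le_add ?_ ?_) <;>
    rw [abs_mul] <;>
    [skip; skip] <;>
    nlinarith [Real.abs_cos_le_one ((j:ℝ)*x - β*π/2), Real.abs_sin_le_one ((j:ℝ)*x - β*π/2),
      abs_nonneg (Acoef φ j), abs_nonneg (Bcoef φ j)]

theorem coef_bound (φ : ℝ → ℝ) (hφi : IntegrableOn φ (Set.Ioc (0:ℝ) (2*π))) (j : ℕ) :
    |Acoef φ j| + |Bcoef φ j| ≤ 2 * ∫ t in Set.Ioc (0:ℝ) (2*π), |φ t| := by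
  have hA : |Acoef φ j| ≤ ∫ t in Set.Ioc (0:ℝ) (2*π), |φ t| := by
    unfold Acoef
    rw [← Real.norm_eq_abs]
    refine le_trans (norm_integral_le_integral_norm _) ?_
    refine integral_mono_of_nonneg (Filter.Eventually.of_forall fun t => norm_nonneg _)
      hφi.norm (Filter.Eventually.of_forall fun t => ?_)
    simp only [Real.norm_eq_abs, abs_mul]
    nlinarith [Real.abs_cos_le_one ((j:ℝ)*t), abs_nonneg (φ t)]
  have hB : |Bcoef φ j| ≤ ∫ t in Set.Ioc (0:ℝ) (2*π), |φ t| := by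
    unfold Bcoef
    rw [← Real.norm_eq_abs]
    refine le_trans (norm_integral_le_integral_norm _) ?_
    refine integral_mono_of_nonneg (Filter.Eventually.of_forall fun t => norm_nonneg _)
      hφi.norm (Filter.Eventually.of_forall fun t => ?_)
    simp only [Real.norm_eq_abs, abs_mul]
    nlinarith [Real.abs_sin_le_one ((j:ℝ)*t), abs_nonneg (φ t)]
  linarith

theorem sumFT (α r β : ℝ) (hα : 0 < α) (hr : 0 < r) (φ : ℝ → ℝ)
    (hφi : IntegrableOn φ (Set.Ioc (0:ℝ) (2*π))) (x : ℝ) :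
    Summable (fun j : ℕ => FT α r β φ j x) := by
  refine Summable.of_norm_bounded
    (g := fun j => Real.exp (-α * (j:ℝ)^r) * (2 * ∫ t in Set.Ioc (0:ℝ) (2*π), |φ t|))
    ((sumExp α r hα hr).mul_right _) fun j => ?_
  rw [Real.norm_eq_abs]
  refine le_trans (FT_bound α r β φ j x) ?_
  exact mul_le_mul_of_nonneg_left (coef_bound φ hφi j) (Real.exp_pos _).le

theorem FT_int_zero (α r β : ℝ) (φ : ℝ → ℝ) (k : ℕ) (hk : 1 ≤ k) :
    ∫ t in (0:ℝ)..(2*π), FT α r β φ k t = 0 := by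
  unfold FT
  rw [intervalIntegral.integral_const_mul]
  have h1 : ∫ t in (0:ℝ)..(2*π), (Real.cos ((k:ℝ)*t - β*π/2) * Acoef φ k
      + Real.sin ((k:ℝ)*t - β*π/2) * Bcoef φ k)
      = (∫ t in (0:ℝ)..(2*π), Real.cos ((k:ℝ)*t - β*π/2)) * Acoef φ k
        + (∫ t in (0:ℝ)..(2*π), Real.sin ((k:ℝ)*t - β*π/2)) * Bcoef φ k := by
    rw [intervalIntegral.integral_add (((by fun_prop : Continuous fun t =>
        Real.cos ((k:ℝ)*t - β*π/2) * Acoef φ k)).intervalIntegrable 0 (2*π))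
      (((by fun_prop : Continuous fun t =>
        Real.sin ((k:ℝ)*t - β*π/2) * Bcoef φ k)).intervalIntegrable 0 (2*π)),
      intervalIntegral.integral_mul_const, intervalIntegral.integral_mul_const]
  rw [h1]
  have h2 : ∫ t in (0:ℝ)..(2*π), Real.cos ((k:ℝ)*t - β*π/2) = 0 :=
    calc ∫ t in (0:ℝ)..(2*π), Real.cos ((k:ℝ)*t - β*π/2)
        = ∫ t in (0:ℝ)..(2*π), Real.cos ((k:ℝ)*t + -(β*π/2)) :=
          intervalIntegral.integral_congr (g := fun t => Real.cos ((k:ℝ)*t + -(β*π/2)))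
            (fun t _ => by rw [sub_eq_add_neg])
      _ = 0 := intCosNat k hk (-(β*π/2))
  have h3 : ∫ t in (0:ℝ)..(2*π), Real.sin ((k:ℝ)*t - β*π/2) = 0 :=
    calc ∫ t in (0:ℝ)..(2*π), Real.sin ((k:ℝ)*t - β*π/2)
        = ∫ t in (0:ℝ)..(2*π), Real.sin ((k:ℝ)*t + -(β*π/2)) :=
          intervalIntegral.integral_congr (g := fun t => Real.sin ((k:ℝ)*t + -(β*π/2)))
            (fun t _ => by rw [sub_eq_add_neg])
      _ = 0 := intSinNat k hk (-(β*π/2))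
  rw [h2, h3]
  ring

theorem FT_orth (α r β : ℝ) (φ : ℝ → ℝ) (k m : ℕ) (hm : 1 ≤ m) (x : ℝ) :
    ∫ t in (0:ℝ)..(2*π), FT α r β φ k t * Real.cos ((m:ℝ)*(x-t))
      = if k = m then π * FT α r β φ k x else 0 := by
  have hpt : ∀ t : ℝ, FT α r β φ k t * Real.cos ((m:ℝ)*(x-t))
      = Real.exp (-α * (k:ℝ)^r) *
          (Acoef φ k * (Real.cos ((k:ℝ)*t + -(β*π/2)) * Real.cos ((m:ℝ)*(x-t)))
            + Bcoef φ k * (Real.sin ((k:ℝ)*t + -(β*π/2)) * Real.cos ((m:ℝ)*(x-t)))) := by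
    intro t
    unfold FT
    rw [show (k:ℝ)*t + -(β*π/2) = (k:ℝ)*t - β*π/2 by ring]
    ring
  rw [intervalIntegral.integral_congr (fun t _ => hpt t),
    intervalIntegral.integral_const_mul,
    intervalIntegral.integral_add
      (((by fun_prop : Continuous fun t => Acoef φ k *
        (Real.cos ((k:ℝ)*t + -(β*π/2)) * Real.cos ((m:ℝ)*(x-t))))).intervalIntegrable 0 (2*π))
      (((by fun_prop : Continuous fun t => Bcoef φ k *
        (Real.sin ((k:ℝ)*t + -(β*π/2)) * Real.cos ((m:ℝ)*(x-t))))).intervalIntegrable 0 (2*π)),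
    intervalIntegral.integral_const_mul, intervalIntegral.integral_const_mul,
    orthCC k m hm (-(β*π/2)) x, orthSC k m hm (-(β*π/2)) x]
  rcases eq_or_ne k m with h | h
  · subst h
    rw [if_pos rfl, if_pos rfl, if_pos rfl]
    unfold FT
    rw [show (k:ℝ)*x + -(β*π/2) = (k:ℝ)*x - β*π/2 by ring]
    ring
  · rw [if_neg h, if_neg h, if_neg h]
    ring

theorem K4 (α r β : ℝ) (φ : ℝ → ℝ)
    (hmean : (∫ t in (0:ℝ)..(2 * π), φ t) = 0) (n k : ℕ) (x : ℝ) :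
    ∫ t in (0:ℝ)..(2*π), FT α r β φ k t *
        (1/2 + ∑ m ∈ Finset.Icc 1 (n-1), Real.cos ((m:ℝ)*(x-t)))
      = if k ∈ Finset.Icc 1 (n-1) then π * FT α r β φ k x else 0 := by
  rcases Nat.eq_zero_or_pos k with hk | hk
  · subst hk
    rw [if_neg (by simp)]
    have : ∀ t : ℝ, FT α r β φ 0 t *
        (1/2 + ∑ m ∈ Finset.Icc 1 (n-1), Real.cos ((m:ℝ)*(x-t))) = 0 := by
      intro t
      rw [FT_zero α r β φ hmean t]
      ring
    rw [intervalIntegral.integral_congr (g := fun _ => (0:ℝ)) (fun t _ => this t)]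
    simp
  · have hpt : ∀ t : ℝ, FT α r β φ k t *
        (1/2 + ∑ m ∈ Finset.Icc 1 (n-1), Real.cos ((m:ℝ)*(x-t)))
        = FT α r β φ k t * (1/2)
          + ∑ m ∈ Finset.Icc 1 (n-1), FT α r β φ k t * Real.cos ((m:ℝ)*(x-t)) := by
      intro t
      rw [mul_add, Finset.mul_sum]
    rw [intervalIntegral.integral_congr (fun t _ => hpt t),
      intervalIntegral.integral_add
        ((show Continuous fun t => FT α r β φ k t * (1/2) from (FT_cont α r β φ k).mul continuous_const).intervalIntegrable 0 (2*π))
        ((Continuous.intervalIntegrable (by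
          refine continuous_finset_sum _ fun m _ => ?_
          exact (FT_cont α r β φ k).mul (by fun_prop)) 0 (2*π))),
      intervalIntegral.integral_finset_sum (fun (m : ℕ) _ =>
        (show Continuous fun t => FT α r β φ k t * Real.cos ((m:ℝ)*(x-t)) from
          (FT_cont α r β φ k).mul (by fun_prop)).intervalIntegrable 0 (2*π)),
      intervalIntegral.integral_mul_const, FT_int_zero α r β φ k hk]
    rw [Finset.sum_congr rfl (fun m hm => FT_orth α r β φ k m (Finset.mem_Icc.mp hm).1 x),
      Finset.sum_ite_eq (Finset.Icc 1 (n-1)) k (fun _ => π * FT α r β φ k x)]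
    ring_nf

theorem Dint (n : ℕ) (x : ℝ) :
    ∫ t in (0:ℝ)..(2*π), (1/2 + ∑ m ∈ Finset.Icc 1 (n-1), Real.cos ((m:ℝ)*(x-t))) = π := by
  rw [intervalIntegral.integral_add
      ((continuous_const).intervalIntegrable 0 (2*π))
      ((Continuous.intervalIntegrable (continuous_finset_sum _ fun m _ => by fun_prop) 0 (2*π)))]
  have hfs := intervalIntegral.integral_finset_sum (μ := volume) (a := (0:ℝ)) (b := 2*π)
    (s := Finset.Icc 1 (n-1)) (f := fun (m:ℕ) t => Real.cos ((m:ℝ)*(x-t))) (fun m _ =>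
      ((by fun_prop : Continuous fun t => Real.cos ((m:ℝ)*(x-t)))).intervalIntegrable 0 (2*π))
  rw [hfs]
  have h1 : ∫ t in (0:ℝ)..(2*π), (1/2 : ℝ) = π := by
    simp [mul_comm]
  have h2 : ∀ m ∈ Finset.Icc 1 (n-1), ∫ t in (0:ℝ)..(2*π), Real.cos ((m:ℝ)*(x-t)) = 0 := by
    intro m hm
    have hm1 : 1 ≤ m := (Finset.mem_Icc.mp hm).1
    have hne : -(m:ℤ) ≠ 0 := by omega
    calc ∫ t in (0:ℝ)..(2*π), Real.cos ((m:ℝ)*(x-t))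
        = ∫ t in (0:ℝ)..(2*π), Real.cos (((-(m:ℤ) : ℤ):ℝ)*t + (m:ℝ)*x) :=
          intervalIntegral.integral_congr
            (g := fun t => Real.cos (((-(m:ℤ) : ℤ):ℝ)*t + (m:ℝ)*x))
            (fun t _ => by push_cast; ring_nf)
      _ = 0 := by rw [intCos (-(m:ℤ)) ((m:ℝ)*x), if_neg hne]
  rw [h1, Finset.sum_congr rfl h2]
  simp

theorem K5 (α r β : ℝ) (hα : 0 < α) (hr : 0 < r) (φ : ℝ → ℝ)
    (hφi : IntegrableOn φ (Set.Ioc (0:ℝ) (2*π)))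
    (hmean : (∫ t in (0:ℝ)..(2 * π), φ t) = 0) (n : ℕ) (a₀ : ℝ) (f : ℝ → ℝ)
    (hfrep : ∀ t : ℝ, f t = a₀/2 + (1/π) * ∑' k : ℕ, FT α r β φ k t) (x : ℝ) :
    fourierPartial n f x = a₀/2 + (1/π) * ∑ k ∈ Finset.Icc 1 (n-1), FT α r β φ k x := by
  have hπ : (0:ℝ) < π := Real.pi_pos
  set D : ℝ → ℝ := fun t => 1/2 + ∑ m ∈ Finset.Icc 1 (n-1), Real.cos ((m:ℝ)*(x-t)) with hD
  have hDcont : Continuous D := by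
    rw [hD]
    exact continuous_const.add (continuous_finset_sum _ fun m _ => by fun_prop)
  have hDbd : ∀ t : ℝ, |D t| ≤ 1/2 + (n-1 : ℕ) := by
    intro t
    rw [hD]
    refine le_trans (abs_add_le _ _) (add_le_add (by rw [abs_of_pos] <;> norm_num) ?_)
    refine le_trans (Finset.abs_sum_le_sum_abs _ _) ?_
    calc ∑ m ∈ Finset.Icc 1 (n-1), |Real.cos ((m:ℝ)*(x-t))|
        ≤ ∑ m ∈ Finset.Icc 1 (n-1), 1 :=
          Finset.sum_le_sum fun m _ => Real.abs_cos_le_one _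
      _ ≤ (n-1 : ℕ) := by simp [Nat.card_Icc]
  have hSFTc : Continuous fun t => ∑' k : ℕ, FT α r β φ k t := by
    refine continuous_tsum (fun k => FT_cont α r β φ k)
      (((sumExp α r hα hr).mul_right (2 * ∫ t in Set.Ioc (0:ℝ) (2*π), |φ t|))) (fun k t => ?_)
    rw [Real.norm_eq_abs]
    exact le_trans (FT_bound α r β φ k t)
      (mul_le_mul_of_nonneg_left (coef_bound φ hφi k) (Real.exp_pos _).le)
  -- main: ∫ SFT * D over Ioc
  have hkey : ∫ t in Set.Ioc (0:ℝ) (2*π), (∑' k : ℕ, FT α r β φ k t) * D t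
      = π * ∑ k ∈ Finset.Icc 1 (n-1), FT α r β φ k x := by
    have hpt : ∀ t : ℝ, (∑' k : ℕ, FT α r β φ k t) * D t
        = ∑' k : ℕ, FT α r β φ k t * D t := fun t => (tsum_mul_right).symm
    rw [setIntegral_congr_fun measurableSet_Ioc (fun t _ => hpt t)]
    have hint : ∀ k : ℕ, IntegrableOn (fun t => FT α r β φ k t * D t) (Set.Ioc (0:ℝ) (2*π)) :=
      fun k => ((FT_cont α r β φ k).mul hDcont).integrableOn_Ioc
    have hsum : Summable fun k : ℕ => ∫ t in Set.Ioc (0:ℝ) (2*π), ‖FT α r β φ k t * D t‖ := by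
      set C := (2 * ∫ t in Set.Ioc (0:ℝ) (2*π), |φ t|) * ((1/2 + (n-1 : ℕ)) * (2*π)) with hC
      refine Summable.of_nonneg_of_le
        (fun k => integral_nonneg fun t => norm_nonneg _)
        (fun k => ?_) (((sumExp α r hα hr).mul_right C))
      have hb : ∀ t : ℝ, ‖FT α r β φ k t * D t‖
          ≤ Real.exp (-α * (k:ℝ)^r) * (2 * ∫ t in Set.Ioc (0:ℝ) (2*π), |φ t|) * (1/2 + (n-1:ℕ)) := by
        intro t
        rw [Real.norm_eq_abs, abs_mul]
        have h1 : |FT α r β φ k t| ≤ Real.exp (-α * (k:ℝ)^r) *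
            (2 * ∫ t in Set.Ioc (0:ℝ) (2*π), |φ t|) :=
          le_trans (FT_bound α r β φ k t)
            (mul_le_mul_of_nonneg_left (coef_bound φ hφi k) (Real.exp_pos _).le)
        have h2 := hDbd t
        have h3 : (0:ℝ) ≤ 1/2 + (n-1:ℕ) := by positivity
        nlinarith [abs_nonneg (FT α r β φ k t), abs_nonneg (D t)]
      calc ∫ t in Set.Ioc (0:ℝ) (2*π), ‖FT α r β φ k t * D t‖
          ≤ ∫ _t in Set.Ioc (0:ℝ) (2*π), Real.exp (-α * (k:ℝ)^r) *
              (2 * ∫ t in Set.Ioc (0:ℝ) (2*π), |φ t|) * (1/2 + (n-1:ℕ)) := by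
            refine integral_mono_of_nonneg
              (Filter.Eventually.of_forall fun t => norm_nonneg _)
              (integrable_const _) (Filter.Eventually.of_forall fun t => hb t)
        _ = Real.exp (-α * (k:ℝ)^r) * C := by
            rw [setIntegral_const, measureReal_def, Real.volume_Ioc]
            rw [ENNReal.toReal_ofReal (by nlinarith [Real.pi_pos]), hC, smul_eq_mul]
            ring
    rw [← integral_tsum_of_summable_integral_norm hint hsum]
    have hterm : ∀ k : ℕ, ∫ t in Set.Ioc (0:ℝ) (2*π), FT α r β φ k t * D t
        = if k ∈ Finset.Icc 1 (n-1) then π * FT α r β φ k x else 0 := by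
      intro k
      rw [← intervalIntegral.integral_of_le (by positivity : (0:ℝ) ≤ 2*π)]
      exact K4 α r β φ hmean n k x
    rw [tsum_congr hterm, tsum_eq_sum (s := Finset.Icc 1 (n-1))
      (fun k hk => if_neg hk)]
    rw [Finset.sum_congr rfl (fun k hk => if_pos hk), Finset.mul_sum]
  -- assemble
  unfold fourierPartial
  have hfD : ∀ t : ℝ, f t * D t = (a₀/2) * D t + (1/π) * ((∑' k : ℕ, FT α r β φ k t) * D t) := by
    intro t
    rw [hfrep t]
    ring
  have hIf : ∫ t in (0:ℝ)..(2*π), f t * D t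
      = (a₀/2) * π + (1/π) * (π * ∑ k ∈ Finset.Icc 1 (n-1), FT α r β φ k x) := by
    rw [intervalIntegral.integral_congr (g := fun t => (a₀/2) * D t
        + (1/π) * ((∑' k : ℕ, FT α r β φ k t) * D t)) (fun t _ => hfD t)]
    rw [intervalIntegral.integral_add
        ((show Continuous fun t => (a₀/2) * D t from continuous_const.mul hDcont).intervalIntegrable 0 (2*π))
        ((show Continuous fun t => (1/π) * ((∑' k : ℕ, FT α r β φ k t) * D t) from continuous_const.mul (hSFTc.mul hDcont)).intervalIntegrable 0 (2*π)),
      intervalIntegral.integral_const_mul, intervalIntegral.integral_const_mul]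
    rw [show (∫ t in (0:ℝ)..(2*π), D t) = π from Dint n x]
    rw [intervalIntegral.integral_of_le (by positivity : (0:ℝ) ≤ 2*π), hkey]
  rw [hIf]
  have hπ' : π ≠ 0 := hπ.ne'
  field_simp

theorem PkerPtail (α r β : ℝ) (t : ℝ) : Pker α r β t = Ptail α r β 1 t := by
  unfold Pker Ptail
  refine tsum_congr fun k => ?_
  norm_num [add_comm]

theorem frep (α r β : ℝ) (hα : 0 < α) (hr : 0 < r) (φ : ℝ → ℝ)
    (hφper : ∀ x : ℝ, φ (x + 2 * π) = φ x)
    (hφi : IntegrableOn φ (Set.Ioc (0:ℝ) (2*π)))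
    (hmean : (∫ t in (0:ℝ)..(2 * π), φ t) = 0) (a₀ : ℝ) (f : ℝ → ℝ)
    (hf : ∀ x : ℝ, f x = a₀ / 2 + (1 / π) * ∫ t in (-π)..π, Pker α r β (x - t) * φ t) :
    ∀ x : ℝ, f x = a₀/2 + (1/π) * ∑' k : ℕ, FT α r β φ k x := by
  intro x
  rw [hf x]
  congr 1
  congr 1
  have hper : Function.Periodic (fun t => Ptail α r β 1 (x - t) * φ t) (2*π) := by
    intro t
    simp only
    rw [hφper t]
    congr 1
    have h := Ptail_per α r β 1 (x - (t + 2*π))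
    rw [show x - (t + 2*π) + 2*π = x - t by ring] at h
    exact h.symm
  have step1 : ∫ t in (-π)..π, Pker α r β (x - t) * φ t
      = ∫ t in (-π)..π, Ptail α r β 1 (x - t) * φ t :=
    intervalIntegral.integral_congr (fun t _ => by rw [PkerPtail])
  have step2 := hper.intervalIntegral_add_eq (-π) 0
  rw [show (-π) + 2*π = π by ring, zero_add] at step2
  rw [step1, step2, intervalIntegral.integral_of_le (by positivity : (0:ℝ) ≤ 2*π),
    K1 α r β hα hr φ hφi 1 x]
  have hs := sumFT α r β hα hr φ hφi x
  rw [Summable.tsum_eq_zero_add hs, FT_zero α r β φ hmean x, zero_add]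
  exact tsum_congr fun k => by rw [Nat.add_comm]

theorem stmt18 (α r β : ℝ) (hα : 0 < α) (hr : 0 < r) (hr1 : r < 1)
    (p q : ℝ≥0∞) (hp : 1 ≤ p) (hptop : p ≠ ⊤) (hpq : p⁻¹ + q⁻¹ = 1) (n : ℕ)
    (a₀ : ℝ) (φ : ℝ → ℝ) (hφper : ∀ x : ℝ, φ (x + 2 * π) = φ x)
    (hφ : MemLp φ p (volume.restrict (Set.Ioc (0:ℝ) (2 * π))))
    (hφ1 : pnormE p φ ≤ 1)
    (hmean : (∫ t in (0:ℝ)..(2 * π), φ t) = 0)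
    (f : ℝ → ℝ)
    (hf : ∀ x : ℝ, f x = a₀ / 2 + (1 / π) * ∫ t in (-π)..π, Pker α r β (x - t) * φ t) :
    supNorm (fun x => f x - fourierPartial n f x) ≤ (1 / π) * pnormE q (Ptail α r β n) := by
  have hπ := Real.pi_pos
  have hq0 : q ≠ 0 := by
    intro h
    rw [h] at hpq
    simp at hpq
  have hφi : IntegrableOn φ (Set.Ioc (0:ℝ) (2*π)) := hφ.integrable hp
  have hfrep := frep α r β hα hr φ hφper hφi hmean a₀ f hf
  have hid : ∀ x : ℝ, f x - fourierPartial n f x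
      = (1/π) * ∫ t in Set.Ioc (0:ℝ) (2*π), Ptail α r β n (x - t) * φ t := by
    intro x
    rw [hfrep x, K5 α r β hα hr φ hφi hmean n a₀ f hfrep x, K1 α r β hα hr φ hφi n x]
    have hs := sumFT α r β hα hr φ hφi x
    have hshift := Summable.sum_add_tsum_nat_add n hs
    have hrange : ∑ k ∈ Finset.range n, FT α r β φ k x
        = ∑ k ∈ Finset.Icc 1 (n-1), FT α r β φ k x := by
      refine (Finset.sum_subset (fun k hk => Finset.mem_range.mpr ?_) (fun k hk hnk => ?_)).symm
      · simp only [Finset.mem_Icc] at hk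
        omega
      · have hk0 : k = 0 := by
          simp only [Finset.mem_Icc, Finset.mem_range] at hk hnk
          omega
        rw [hk0]
        exact FT_zero α r β φ hmean x
    have htsum : ∑' k : ℕ, FT α r β φ (n + k) x = ∑' k : ℕ, FT α r β φ (k + n) x :=
      tsum_congr fun k => by rw [Nat.add_comm]
    rw [htsum]
    have hdec : (∑' k : ℕ, FT α r β φ k x) = (∑ k ∈ Finset.Icc 1 (n-1), FT α r β φ k x)
        + ∑' k : ℕ, FT α r β φ (k + n) x := by
      rw [← hrange, hshift]
    rw [hdec]
    ring
  have hM := fun t => Ptail_bound α r β hα hr n t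
  have hPcont := Ptail_cont α r β hα hr n
  have hPfin : eLpNorm (Ptail α r β n) q (volume.restrict (Set.Ioc (0:ℝ) (2*π))) ≠ ∞ := by
    refine (MemLp.mono_exponent (memLp_top_of_bound hPcont.aestronglyMeasurable _
      (Filter.Eventually.of_forall fun t => by rw [Real.norm_eq_abs]; exact hM t)) le_top).2.ne
  have hbd : ∀ x : ℝ, |f x - fourierPartial n f x| ≤ (1/π) * pnormE q (Ptail α r β n) := by
    intro x
    rw [hid x, abs_mul, abs_of_pos (by positivity : (0:ℝ) < 1/π)]
    refine mul_le_mul_of_nonneg_left ?_ (by positivity)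
    have hKcont : Continuous fun t => Ptail α r β n (x - t) :=
      hPcont.comp (continuous_sub_left x)
    unfold pnormE at hφ1 ⊢
    refine le_trans (holderBound p q hp hpq φ hφ hφ1
      (fun t => Ptail α r β n (x - t)) hKcont _ (fun t => hM (x - t))) ?_
    exact ENNReal.toReal_mono hPfin (eLpNorm_shift q hq0 (Ptail α r β n) hPcont (Ptail_per α r β n) x)
  unfold supNorm
  exact ciSup_le fun x => hbd x
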